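/- (Counterexample, LTI SSM, collapse case) Define the sequence α_0 = 1 and α_{k+1} = α_k(1 + 4/(1+λ)²) + (4/(1+λ))·√(α_k−1)·√α_k for real λ. If λ > −1 or −2 < λ < −1, then α_k → ∞; consequently the 2×2 matrices Y^{(k)} = [[1, 0], [√((α_k−1)/α_k), 1/√α_k]] converge to the rank-one matrix [[1,0],[1,0]], and μ(Y^{(k)}) → 0. -/

import Mathlib

open Filter Matrix

noncomputable def eNorm {n : Type*} [Fintype n] (v : n → ℝ) : ℝ :=
  Real.sqrt (∑ i, v i ^ 2)

noncomputable def frobNorm {m n : Type*} [Fintype m] [Fintype n] (A : Matrix m n ℝ) : ℝ :=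
  Real.sqrt (∑ i, ∑ j, A i j ^ 2)

/-- Smallest singular value: infimum of `‖B x‖` over unit vectors `x`. -/
noncomputable def sigmaMin {n p : Type*} [Fintype n] [Fintype p] (B : Matrix n p ℝ) : ℝ :=
  ⨅ x : {x : p → ℝ // eNorm x = 1}, eNorm (B.mulVec x)

/-- Largest singular value (operator/spectral norm): supremum of `‖B x‖` over unit vectors. -/
noncomputable def sigmaMax {n p : Type*} [Fintype n] [Fintype p] (B : Matrix n p ℝ) : ℝ :=
  ⨆ x : {x : p → ℝ // eNorm x = 1}, eNorm (B.mulVec x)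

/-- The all-ones matrix `𝟏𝟏ᵀ`. -/
def onesMat (N : ℕ) : Matrix (Fin N) (Fin N) ℝ := fun _ _ => 1

/-- Rank-collapse measure `μ(Y) = ‖Y − (1/N) 𝟏𝟏ᵀ Y‖_F`. -/
noncomputable def mu {N d : ℕ} (Y : Matrix (Fin N) (Fin d) ℝ) : ℝ :=
  frobNorm (Y - ((N : ℝ))⁻¹ • (onesMat N * Y))

/-- Counterexample, LTI SSM, collapse case: for `λ > −1` or `−2 < λ < −1` the
sequence `α_k` diverges and the matrices `Y^{(k)}` collapse to rank one. -/
theorem lti_counterexample_collapse (lam : ℝ) (α : ℕ → ℝ)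
    (hα0 : α 0 = 1)
    (hrec : ∀ k, α (k + 1) =
      α k * (1 + 4 / (1 + lam) ^ 2) +
        (4 / (1 + lam)) * Real.sqrt (α k - 1) * Real.sqrt (α k))
    (hlam : lam > -1 ∨ (-2 < lam ∧ lam < -1)) :
    Filter.Tendsto α Filter.atTop Filter.atTop ∧
    Filter.Tendsto
      (fun k => (!![1, 0; Real.sqrt ((α k - 1) / α k), 1 / Real.sqrt (α k)] :
        Matrix (Fin 2) (Fin 2) ℝ))
      Filter.atTop (nhds (!![1, 0; 1, 0] : Matrix (Fin 2) (Fin 2) ℝ)) ∧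
    Filter.Tendsto
      (fun k => mu (!![1, 0; Real.sqrt ((α k - 1) / α k), 1 / Real.sqrt (α k)] :
        Matrix (Fin 2) (Fin 2) ℝ))
      Filter.atTop (nhds 0) := by
  -- Step 1: find a ratio r > 1 with α (k+1) ≥ r * α k whenever α k ≥ 1
  obtain ⟨r, hr1, key⟩ : ∃ r : ℝ, 1 < r ∧ ∀ x : ℝ, 1 ≤ x →
      r * x ≤ x * (1 + 4 / (1 + lam) ^ 2) +
        (4 / (1 + lam)) * Real.sqrt (x - 1) * Real.sqrt x := by
    rcases hlam with h | ⟨h2, h1⟩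
    · have hu : (0:ℝ) < 1 + lam := by linarith
      have h4 : (0:ℝ) < 4 / (1 + lam) ^ 2 := by positivity
      refine ⟨1 + 4 / (1 + lam) ^ 2, by linarith, fun x hx => ?_⟩
      have hs : 0 ≤ Real.sqrt (x - 1) := Real.sqrt_nonneg _
      have ht : 0 ≤ Real.sqrt x := Real.sqrt_nonneg _
      have hc : 0 ≤ 4 / (1 + lam) := by positivity
      nlinarith [mul_nonneg (mul_nonneg hc hs) ht]
    · have hu : 1 + lam < 0 := by linarith
      have hu0 : (1 + lam) ≠ 0 := ne_of_lt hu
      refine ⟨((3 + lam) / (1 + lam)) ^ 2, ?_, fun x hx => ?_⟩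
      · rw [div_pow, lt_div_iff₀ (by positivity)]
        nlinarith
      · have hx0 : (0:ℝ) ≤ x := by linarith
        have hst : Real.sqrt (x - 1) * Real.sqrt x ≤ x := by
          calc Real.sqrt (x - 1) * Real.sqrt x
              ≤ Real.sqrt x * Real.sqrt x :=
                mul_le_mul_of_nonneg_right
                  (Real.sqrt_le_sqrt (by linarith)) (Real.sqrt_nonneg _)
            _ = x := Real.mul_self_sqrt hx0
        rw [← sub_nonneg]
        have hrw : x * (1 + 4 / (1 + lam) ^ 2) +
            (4 / (1 + lam)) * Real.sqrt (x - 1) * Real.sqrt x -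
            ((3 + lam) / (1 + lam)) ^ 2 * x =
            (x * ((1 + lam) ^ 2 + 4) +
              4 * (1 + lam) * (Real.sqrt (x - 1) * Real.sqrt x) -
              (3 + lam) ^ 2 * x) / (1 + lam) ^ 2 := by
          field_simp
        rw [hrw]
        apply div_nonneg _ (sq_nonneg _)
        nlinarith [mul_nonneg (by linarith : (0:ℝ) ≤ -(1 + lam))
          (by linarith : (0:ℝ) ≤ x - Real.sqrt (x - 1) * Real.sqrt x)]
  have hr0 : (0:ℝ) ≤ r := by linarith
  have h1 : ∀ k, 1 ≤ α k := by
    intro k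
    induction k with
    | zero => simp [hα0]
    | succ k ih =>
        have := key (α k) ih
        rw [hrec k] at *
        nlinarith
  have hstep : ∀ k, r * α k ≤ α (k + 1) := by
    intro k
    rw [hrec k]
    exact key (α k) (h1 k)
  have hpow : ∀ k, r ^ k ≤ α k := by
    intro k
    induction k with
    | zero => simp [hα0]
    | succ k ih =>
        calc r ^ (k + 1) = r * r ^ k := by ring
          _ ≤ r * α k := by nlinarith
          _ ≤ α (k + 1) := hstep k
  have hA : Tendsto α atTop atTop :=
    tendsto_atTop_mono hpow (tendsto_pow_atTop_atTop_of_one_lt hr1)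
  -- entrywise limits
  have hinv : Tendsto (fun k => (α k)⁻¹) atTop (nhds 0) :=
    Tendsto.inv_tendsto_atTop hA
  have hfrac : Tendsto (fun k => (α k - 1) / α k) atTop (nhds 1) := by
    have hne : ∀ k, α k ≠ 0 := fun k => by have := h1 k; linarith
    have : Tendsto (fun k => 1 - (α k)⁻¹) atTop (nhds 1) := by
      simpa using tendsto_const_nhds.sub hinv
    refine this.congr fun k => ?_
    rw [sub_div, div_self (hne k), one_div]
  have h10 : Tendsto (fun k => Real.sqrt ((α k - 1) / α k)) atTop (nhds 1) := by
    have := (Real.continuous_sqrt.tendsto 1).comp hfrac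
    simpa [Function.comp_def] using this
  have h11 : Tendsto (fun k => 1 / Real.sqrt (α k)) atTop (nhds 0) := by
    have h := (Real.continuous_sqrt.tendsto 0).comp hinv
    simp only [Function.comp_def, Real.sqrt_zero, Real.sqrt_inv] at h
    simpa [one_div] using h
  -- matrix convergence
  have hmat : Tendsto
      (fun k => (!![1, 0; Real.sqrt ((α k - 1) / α k), 1 / Real.sqrt (α k)] :
        Matrix (Fin 2) (Fin 2) ℝ))
      atTop (nhds (!![1, 0; 1, 0] : Matrix (Fin 2) (Fin 2) ℝ)) := by
    apply tendsto_pi_nhds.mpr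
    intro i
    rw [tendsto_pi_nhds]
    intro j
    fin_cases i <;> fin_cases j <;> simp <;>
      first
        | exact tendsto_const_nhds
        | exact h10
        | simpa [one_div] using h11
  refine ⟨hA, hmat, ?_⟩
  -- continuity of mu and value at the limit
  have hcont : Continuous (fun Y : Matrix (Fin 2) (Fin 2) ℝ => mu Y) := by
    unfold mu frobNorm
    apply Real.continuous_sqrt.comp
    apply continuous_finset_sum
    intro i _
    apply continuous_finset_sum
    intro j _
    apply Continuous.pow
    simp only [Matrix.sub_apply, Matrix.smul_apply, Matrix.mul_apply, onesMat,
      one_mul, smul_eq_mul]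
    exact (continuous_apply_apply i j).sub
      (continuous_const.mul (continuous_finset_sum _ fun k _ =>
        continuous_apply_apply k j))
  have hval : mu (!![1, 0; 1, 0] : Matrix (Fin 2) (Fin 2) ℝ) = 0 := by
    unfold mu frobNorm
    have : (!![1, 0; 1, 0] : Matrix (Fin 2) (Fin 2) ℝ) -
        ((2 : ℕ) : ℝ)⁻¹ • (onesMat 2 * !![1, 0; 1, 0]) = 0 := by
      ext i j
      fin_cases i <;> fin_cases j <;>
        simp [onesMat, Matrix.mul_apply, Fin.sum_univ_two] <;> norm_num
    rw [this]
    simp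
  have := (hcont.tendsto _).comp hmat
  rw [hval] at this
  exact this
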